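/- Let 0 < α < 2 and c > 0. The function ρ is a metric on S(α, c): ρ(μ₁, μ₂) is finite, symmetric, satisfies the triangle inequality, and ρ(μ₁, μ₂) = 0 implies μ₁ = μ₂ (since then the associated functions, hence the characteristic functions, of μ₁ and μ₂ coincide on all of ℝ). -/

import Mathlib

open MeasureTheory Filter Finset
open scoped Topology BoundedContinuousFunction ENNReal

/-- The characteristic function of a measure on `ℝ`. -/
noncomputable def charFn (μ : Measure ℝ) (t : ℝ) : ℂ :=
  ∫ x, Complex.exp (Complex.I * (t * x)) ∂μ

/-- `μ ∈ S(α, c)`: `μ` is a symmetric probability distribution on `ℝ` whose characteristic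
function satisfies `φ(t) = 1 - c|t|^α + o(|t|^α)` as `t → 0`. -/
def MemS (α c : ℝ) (μ : Measure ℝ) : Prop :=
  IsProbabilityMeasure μ ∧ μ.map (fun x => -x) = μ ∧
    Asymptotics.IsLittleO (𝓝 (0 : ℝ))
      (fun t : ℝ => charFn μ t - ((1 - c * |t| ^ α : ℝ) : ℂ))
      (fun t : ℝ => |t| ^ α)

/-- `β` is the function associated with `μ ∈ S(α, c)`:
`φ(t) = 1 - c|t|^α + β(t)|t|^α` with `β` bounded continuous and `β 0 = 0`. -/
structure IsAssocFn (α c : ℝ) (μ : Measure ℝ) (β : ℝ → ℝ) : Prop where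
  continuous : Continuous β
  bounded : ∃ M : ℝ, ∀ t, |β t| ≤ M
  zero : β 0 = 0
  eq : ∀ t : ℝ, charFn μ t = ((1 - c * |t| ^ α + β t * |t| ^ α : ℝ) : ℂ)

/-- The metric `ρ` on `S(α, c)`, expressed in terms of the associated functions. -/
noncomputable def rho (β₁ β₂ : ℝ → ℝ) : ℝ :=
  (⨆ t : {t : ℝ // |t| ≤ 1}, |β₁ t.1 - β₂ t.1|) +
    ∑' k : ℕ, (2 ^ k : ℝ)⁻¹ *
      ⨆ t : {t : ℝ // 2 ^ k ≤ |t| ∧ |t| ≤ 2 ^ (k + 1)}, |β₁ t.1 - β₂ t.1|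

/-- The normalization `A_N = (∑_{k=1}^N |a_k|^α)^{1/α}`. -/
noncomputable def wA (α : ℝ) (a : ℕ → ℝ) (N : ℕ) : ℝ :=
  (∑ k ∈ Finset.range N, |a k| ^ α) ^ (1 / α)

/-- The uniform asymptotic negligibility condition `max_{1≤k≤N} |a_k| = o(A_N)`. -/
def UAN (α : ℝ) (a : ℕ → ℝ) : Prop :=
  ∀ ε > (0 : ℝ), ∃ N₀ : ℕ, ∀ N ≥ N₀, ∀ k < N, |a k| ≤ ε * wA α a N

/-- `F` is a distribution function. -/
def IsDistFun (F : ℝ → ℝ) : Prop :=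
  Monotone F ∧ Tendsto F atBot (𝓝 0) ∧ Tendsto F atTop (𝓝 1)

/-- `(X_n)` is a determining sequence: relative to any set `A` of positive probability, it
has a limit distribution `F_A`. -/
def Determining {Ω : Type*} [MeasurableSpace Ω] (P : Measure Ω) (X : ℕ → Ω → ℝ) : Prop :=
  ∀ A : Set Ω, MeasurableSet A → P A ≠ 0 →
    ∃ F : ℝ → ℝ, IsDistFun F ∧
      ∀ t : ℝ, ContinuousAt F t →
        Tendsto (fun n => (P (A ∩ {ω | X n ω < t})).toReal / (P A).toReal) atTop (𝓝 (F t))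

/-- `μ` is the limit random measure of the determining sequence `(X_n)`: a measurable map to
the probability measures on `ℝ` such that for every continuity point `t` of `F_Ω` the
indicators `1{X_n ≤ t}` converge weakly in `L^∞` to `μ(-∞, t]`. -/
def IsLimitRandomMeasure {Ω : Type*} [MeasurableSpace Ω] (P : Measure Ω)
    (X : ℕ → Ω → ℝ) (μ : Ω → Measure ℝ) : Prop :=
  (∀ ω, IsProbabilityMeasure (μ ω)) ∧
  (∀ s : Set ℝ, MeasurableSet s → Measurable fun ω => μ ω s) ∧
  ∃ F : ℝ → ℝ, IsDistFun F ∧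
    (∀ t : ℝ, ContinuousAt F t →
      Tendsto (fun n => (P {ω | X n ω < t}).toReal) atTop (𝓝 (F t))) ∧
    ∀ t : ℝ, ContinuousAt F t → ∀ η : Ω → ℝ, Integrable η P →
      Tendsto (fun n => ∫ ω, ({ω' | X n ω' ≤ t}.indicator (fun _ => (1 : ℝ)) ω) * η ω ∂P)
        atTop (𝓝 (∫ ω, (μ ω (Set.Iic t)).toReal * η ω ∂P))

/-!
Each sup in `ρ` is bounded by the sup of `|β₁ - β₂|` over `ℝ`, so the series is dominated by a
geometric one, and symmetry and the triangle inequality hold termwise. Since `[-1, 1]` and the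
dyadic annuli `2 ^ k ≤ |t| ≤ 2 ^ (k + 1)` cover `ℝ`, `ρ = 0` forces `β₁ = β₂`, hence equal
characteristic functions, and a finite measure on `ℝ` is determined by its characteristic function.
-/

open Set

lemma charFn_eq_charFun (μ : Measure ℝ) : charFn μ = charFun μ := by
  ext t
  simp only [charFn, charFun_apply_real]
  congr 1 with x
  ring_nf

lemma MeasureTheory.Measure.ext_of_charFn {μ ν : Measure ℝ} [IsFiniteMeasure μ] [IsFiniteMeasure ν]
    (h : charFn μ = charFn ν) : μ = ν :=
  Measure.ext_of_charFun (by rwa [← charFn_eq_charFun, ← charFn_eq_charFun])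

lemma IsAssocFn.charFn_eq {α c : ℝ} {μ ν : Measure ℝ} {β : ℝ → ℝ}
    (hμ : IsAssocFn α c μ β) (hν : IsAssocFn α c ν β) : charFn μ = charFn ν :=
  funext fun t => by rw [hμ.eq, hν.eq]

lemma IsAssocFn.bddAbove_abs_sub {α c α' c' : ℝ} {μ ν : Measure ℝ} {β β' : ℝ → ℝ}
    (hβ : IsAssocFn α c μ β) (hβ' : IsAssocFn α' c' ν β') :
    BddAbove (range fun t => |β t - β' t|) := by
  obtain ⟨M, hM⟩ := hβ.bounded
  obtain ⟨M', hM'⟩ := hβ'.bounded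
  exact ⟨M + M', by rintro _ ⟨t, rfl⟩; exact (abs_sub _ _).trans (add_le_add (hM t) (hM' t))⟩

section SupAbsSub

variable {ι : Type*} {f g h : ι → ℝ}

lemma ciSup_abs_sub_le_add (hfg : BddAbove (range fun i => |f i - g i|))
    (hgh : BddAbove (range fun i => |g i - h i|)) :
    ⨆ i, |f i - h i| ≤ (⨆ i, |f i - g i|) + ⨆ i, |g i - h i| := by
  cases isEmpty_or_nonempty ι
  · simp only [Real.iSup_of_isEmpty, add_zero, le_refl]
  · exact ciSup_le fun i => (abs_sub_le _ _ _).trans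
      (add_le_add (le_ciSup hfg i) (le_ciSup hgh i))

lemma eq_of_ciSup_abs_sub_eq_zero (hfg : BddAbove (range fun i => |f i - g i|))
    (h0 : ⨆ i, |f i - g i| = 0) (i : ι) : f i = g i :=
  sub_eq_zero.1 (abs_nonpos_iff.1 (h0 ▸ le_ciSup hfg i))

end SupAbsSub

section Rho

variable {β₁ β₂ β₃ : ℝ → ℝ}

lemma BddAbove.abs_sub_subtype (h : BddAbove (range fun t => |β₁ t - β₂ t|)) (p : ℝ → Prop) :
    BddAbove (range fun t : {t : ℝ // p t} => |β₁ t - β₂ t|) :=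
  h.mono (range_comp_subset_range Subtype.val fun t => |β₁ t - β₂ t|)

lemma BddAbove.abs_sub_trans (h₁₂ : BddAbove (range fun t => |β₁ t - β₂ t|))
    (h₂₃ : BddAbove (range fun t => |β₂ t - β₃ t|)) :
    BddAbove (range fun t => |β₁ t - β₃ t|) := by
  obtain ⟨M, hM⟩ := h₁₂
  obtain ⟨M', hM'⟩ := h₂₃
  exact ⟨M + M', by
    rintro _ ⟨t, rfl⟩
    exact (abs_sub_le _ _ _).trans (add_le_add (hM ⟨t, rfl⟩) (hM' ⟨t, rfl⟩))⟩

noncomputable def dyadicSup (β₁ β₂ : ℝ → ℝ) (k : ℕ) : ℝ :=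
  ⨆ t : {t : ℝ // 2 ^ k ≤ |t| ∧ |t| ≤ 2 ^ (k + 1)}, |β₁ t.1 - β₂ t.1|

lemma rho_eq_add_tsum_dyadicSup (β₁ β₂ : ℝ → ℝ) :
    rho β₁ β₂ = (⨆ t : {t : ℝ // |t| ≤ 1}, |β₁ t.1 - β₂ t.1|) +
      ∑' k : ℕ, (2 ^ k : ℝ)⁻¹ * dyadicSup β₁ β₂ k :=
  rfl

lemma dyadicSup_nonneg (β₁ β₂ : ℝ → ℝ) (k : ℕ) : 0 ≤ dyadicSup β₁ β₂ k :=
  Real.iSup_nonneg fun _ => abs_nonneg _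

lemma weighted_dyadicSup_nonneg (β₁ β₂ : ℝ → ℝ) (k : ℕ) :
    0 ≤ (2 ^ k : ℝ)⁻¹ * dyadicSup β₁ β₂ k :=
  mul_nonneg (by positivity) (dyadicSup_nonneg β₁ β₂ k)

lemma summable_dyadicSup (h : BddAbove (range fun t => |β₁ t - β₂ t|)) :
    Summable fun k : ℕ => (2 ^ k : ℝ)⁻¹ * dyadicSup β₁ β₂ k := by
  obtain ⟨M, hM⟩ := h
  have hM0 : 0 ≤ M := (abs_nonneg _).trans (hM ⟨0, rfl⟩)
  refine .of_nonneg_of_le (weighted_dyadicSup_nonneg β₁ β₂) (fun k => ?_)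
    (summable_geometric_two.mul_left M)
  calc (2 ^ k : ℝ)⁻¹ * dyadicSup β₁ β₂ k ≤ (2 ^ k : ℝ)⁻¹ * M :=
        mul_le_mul_of_nonneg_left (Real.iSup_le (fun t => hM ⟨t, rfl⟩) hM0) (by positivity)
    _ = M * (1 / 2) ^ k := by rw [one_div, inv_pow, mul_comm]

lemma rho_nonneg (β₁ β₂ : ℝ → ℝ) : 0 ≤ rho β₁ β₂ :=
  add_nonneg (Real.iSup_nonneg fun _ => abs_nonneg _)
    (tsum_nonneg (weighted_dyadicSup_nonneg β₁ β₂))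

lemma rho_comm (β₁ β₂ : ℝ → ℝ) : rho β₁ β₂ = rho β₂ β₁ := by
  simp only [rho, abs_sub_comm (β₁ _)]

lemma rho_triangle (h₁₂ : BddAbove (range fun t => |β₁ t - β₂ t|))
    (h₂₃ : BddAbove (range fun t => |β₂ t - β₃ t|)) :
    rho β₁ β₃ ≤ rho β₁ β₂ + rho β₂ β₃ := by
  have hunit := ciSup_abs_sub_le_add (h₁₂.abs_sub_subtype (|·| ≤ 1)) (h₂₃.abs_sub_subtype _)
  have hdyadic : ∀ k : ℕ, dyadicSup β₁ β₃ k ≤ dyadicSup β₁ β₂ k + dyadicSup β₂ β₃ k :=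
    fun k => ciSup_abs_sub_le_add (h₁₂.abs_sub_subtype _) (h₂₃.abs_sub_subtype _)
  have hseries : ∑' k : ℕ, (2 ^ k : ℝ)⁻¹ * dyadicSup β₁ β₃ k ≤
      ∑' k : ℕ, (2 ^ k : ℝ)⁻¹ * dyadicSup β₁ β₂ k +
        ∑' k : ℕ, (2 ^ k : ℝ)⁻¹ * dyadicSup β₂ β₃ k := by
    rw [← (summable_dyadicSup h₁₂).tsum_add (summable_dyadicSup h₂₃)]
    refine Summable.tsum_le_tsum (fun k => ?_) (summable_dyadicSup (h₁₂.abs_sub_trans h₂₃))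
      ((summable_dyadicSup h₁₂).add (summable_dyadicSup h₂₃))
    rw [← mul_add]
    exact mul_le_mul_of_nonneg_left (hdyadic k) (by positivity)
  simp only [rho_eq_add_tsum_dyadicSup]
  linarith

lemma eq_of_rho_eq_zero (h : BddAbove (range fun t => |β₁ t - β₂ t|)) (h0 : rho β₁ β₂ = 0) :
    β₁ = β₂ := by
  have hunit_nonneg : 0 ≤ ⨆ t : {t : ℝ // |t| ≤ 1}, |β₁ t.1 - β₂ t.1| :=
    Real.iSup_nonneg fun _ => abs_nonneg _
  have hseries_nonneg : 0 ≤ ∑' k : ℕ, (2 ^ k : ℝ)⁻¹ * dyadicSup β₁ β₂ k :=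
    tsum_nonneg (weighted_dyadicSup_nonneg β₁ β₂)
  rw [rho_eq_add_tsum_dyadicSup] at h0
  have hunit : ⨆ t : {t : ℝ // |t| ≤ 1}, |β₁ t.1 - β₂ t.1| = 0 := by linarith
  have hdyadic : ∀ k, dyadicSup β₁ β₂ k = 0 := by
    have hsum : HasSum (fun k : ℕ => (2 ^ k : ℝ)⁻¹ * dyadicSup β₁ β₂ k) 0 :=
      (summable_dyadicSup h).hasSum_iff.2 (by linarith)
    intro k
    have hk := congr_fun ((hasSum_zero_iff_of_nonneg (weighted_dyadicSup_nonneg β₁ β₂)).1 hsum) k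
    exact (mul_eq_zero.1 hk).resolve_left (by positivity)
  funext t
  rcases le_or_gt |t| 1 with ht | ht
  · exact eq_of_ciSup_abs_sub_eq_zero (h.abs_sub_subtype _) hunit ⟨t, ht⟩
  · obtain ⟨k, hk, hk'⟩ := exists_nat_pow_near ht.le one_lt_two
    exact eq_of_ciSup_abs_sub_eq_zero (h.abs_sub_subtype _) (hdyadic k) ⟨t, hk, hk'.le⟩

end Rho

theorem statement5_general
    (α c : ℝ)
    (μ₁ μ₂ μ₃ : Measure ℝ) (β₁ β₂ β₃ : ℝ → ℝ)
    (h1 : MemS α c μ₁) (h2 : MemS α c μ₂)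
    (hβ₁ : IsAssocFn α c μ₁ β₁) (hβ₂ : IsAssocFn α c μ₂ β₂) (hβ₃ : IsAssocFn α c μ₃ β₃) :
    (Summable fun k : ℕ => (2 ^ k : ℝ)⁻¹ *
        ⨆ t : {t : ℝ // 2 ^ k ≤ |t| ∧ |t| ≤ 2 ^ (k + 1)}, |β₁ t.1 - β₂ t.1|) ∧
    0 ≤ rho β₁ β₂ ∧
    rho β₁ β₂ = rho β₂ β₁ ∧
    rho β₁ β₃ ≤ rho β₁ β₂ + rho β₂ β₃ ∧
    (rho β₁ β₂ = 0 → μ₁ = μ₂) := by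
  have h₁₂ := hβ₁.bddAbove_abs_sub hβ₂
  refine ⟨summable_dyadicSup h₁₂, rho_nonneg β₁ β₂, rho_comm β₁ β₂,
    rho_triangle h₁₂ (hβ₂.bddAbove_abs_sub hβ₃), fun h0 => ?_⟩
  have := h1.1
  have := h2.1
  obtain rfl := eq_of_rho_eq_zero h₁₂ h0
  exact Measure.ext_of_charFn (hβ₁.charFn_eq hβ₂)

/-- `ρ` is a metric on `S(α, c)`: it is finite (the defining series is summable),
nonnegative, symmetric, satisfies the triangle inequality, and `ρ(μ₁, μ₂) = 0` implies
`μ₁ = μ₂`. -/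
theorem statement5
    (α c : ℝ) (hα : 0 < α) (hα2 : α < 2) (hc : 0 < c)
    (μ₁ μ₂ μ₃ : Measure ℝ) (β₁ β₂ β₃ : ℝ → ℝ)
    (h1 : MemS α c μ₁) (h2 : MemS α c μ₂) (h3 : MemS α c μ₃)
    (hβ₁ : IsAssocFn α c μ₁ β₁) (hβ₂ : IsAssocFn α c μ₂ β₂) (hβ₃ : IsAssocFn α c μ₃ β₃) :
    (Summable fun k : ℕ => (2 ^ k : ℝ)⁻¹ *
        ⨆ t : {t : ℝ // 2 ^ k ≤ |t| ∧ |t| ≤ 2 ^ (k + 1)}, |β₁ t.1 - β₂ t.1|) ∧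
    0 ≤ rho β₁ β₂ ∧
    rho β₁ β₂ = rho β₂ β₁ ∧
    rho β₁ β₃ ≤ rho β₁ β₂ + rho β₂ β₃ ∧
    (rho β₁ β₂ = 0 → μ₁ = μ₂) :=
  statement5_general α c μ₁ μ₂ μ₃ β₁ β₂ β₃ h1 h2 hβ₁ hβ₂ hβ₃
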